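/- For all integers m ≥ 1 and 0 ≤ l ≤ m, one has Σ_{k=m−l+1}^{m+1} C(2m−k+1, m) · C(k−1, m−l) = C(2m+1, l), where C(p,q) denotes the binomial coefficient (with C(p,q) = 0 when q > p). -/

import Mathlib

open Finset PowerSeries

/-- Coefficient `n` of `(1 - X)⁻¹ ^ (r + 1) * (1 - X)⁻¹ ^ (s + 1) = (1 - X)⁻¹ ^ (r + s + 2)`. -/
theorem Nat.sum_antidiagonal_add_choose_mul_add_choose (r s n : ℕ) :
    ∑ ij ∈ antidiagonal n, (r + ij.1).choose r * (s + ij.2).choose s =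
      (r + s + 1 + n).choose (r + s + 1) := by
  have h := congrArg (coeff n) (pow_add (mk 1 : ℤ⟦X⟧) (r + 1) (s + 1))
  rw [show r + 1 + (s + 1) = r + s + 1 + 1 by ring] at h
  simp only [mk_one_pow_eq_mk_choose_add, coeff_mul, coeff_mk] at h
  exact_mod_cast h.symm

/-- `∑_{k=m-l+1}^{m+1} C(2m-k+1, m) C(k-1, m-l) = C(2m+1, l)`. -/
theorem binomial_identity_three (m l : ℕ) (hm : 1 ≤ m) (hl : l ≤ m) :
    ∑ k ∈ Finset.Icc (m - l + 1) (m + 1),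
        (2 * m - k + 1).choose m * (k - 1).choose (m - l) = (2 * m + 1).choose l := by
  calc
    _ = ∑ ij ∈ antidiagonal l, (m + ij.1).choose m * (m - l + ij.2).choose (m - l) := by
      refine sum_nbij' (fun k ↦ (m + 1 - k, k - (m - l + 1))) (fun ij ↦ m + 1 - ij.1)
        (fun _ h ↦ ?_) (fun _ h ↦ ?_) (fun _ h ↦ ?_) (fun _ h ↦ ?_) (fun _ h ↦ ?_) <;>
        simp only [mem_Icc, HasAntidiagonal.mem_antidiagonal, Prod.ext_iff] at h ⊢
      all_goals first | omega | congr 1 <;> exact congrArg (Nat.choose · _) (by omega)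
    _ = (2 * m + 1).choose (2 * m + 1 - l) := by
      rw [Nat.sum_antidiagonal_add_choose_mul_add_choose]
      congr 1 <;> omega
    _ = (2 * m + 1).choose l := Nat.choose_symm (by omega)
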